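/- For any families L, M, N of finite subsets of ℕ, the composition operation on families is associative: (L[M])[N] = L[M[N]]. -/

import Mathlib

noncomputable section

/-- `A < B` for finite sets of naturals: every element of `A` is smaller than every
element of `B` (i.e. `max A < min B`, with the conventions `∅ < B` and `A < ∅`). -/
def finLT (A B : Finset ℕ) : Prop := ∀ a ∈ A, ∀ b ∈ B, a < b

/-- The minimum of a finite set of naturals (`0` if the set is empty; it is only ever
used for nonempty sets). -/
def sMin (A : Finset ℕ) : ℕ := sInf (A : Set ℕ)

/-- The composition `M[N]` of two families of finite subsets of `ℕ`:
all unions `F_1 ∪ ⋯ ∪ F_k` with `F_i ∈ N` nonempty, `F_1 < F_2 < ⋯ < F_k` and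
`{min F_i : i = 1, …, k} ∈ M`. -/
def famComp (M N : Set (Finset ℕ)) : Set (Finset ℕ) :=
  {A | ∃ (k : ℕ) (F : Fin k → Finset ℕ),
        (∀ i, F i ∈ N) ∧ (∀ i, (F i).Nonempty) ∧
        (∀ i j : Fin k, i < j → finLT (F i) (F j)) ∧
        (Finset.univ.image fun i => sMin (F i)) ∈ M ∧
        A = Finset.univ.biUnion F}

/-!
An element of `M[N]` is determined by its blocks: a finite family of nonempty sets, any two of
which lie one before the other (`IsBlockFamily`), taken from `N` and whose minima form a member
of `M`. An element of `(L[M])[N]` is a block family `𝓖` from `N` whose set of minima is itself cut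
into blocks `ℋ` from `M`; grouping the members of `𝓖` according to the block of `ℋ` that contains
their minimum gives the blocks, from `M[N]`, of an element of `L[M[N]]`. Conversely, the blocks of
the blocks of an element of `L[M[N]]` form such a family `𝓖`. Both passages only need that the
minimum of a union of nonempty sets is the minimum of their minima.
-/

open Finset

theorem finLT.mono {F G F' G' : Finset ℕ} (h : finLT F G) (hF : F' ⊆ F) (hG : G' ⊆ G) :
    finLT F' G' :=
  fun a ha b hb => h a (hF ha) b (hG hb)

theorem finLT_biUnion_iff {𝓕 𝓖 : Finset (Finset ℕ)} :
    finLT (𝓕.biUnion id) (𝓖.biUnion id) ↔ ∀ F ∈ 𝓕, ∀ G ∈ 𝓖, finLT F G := by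
  simp only [finLT, mem_biUnion, id]
  exact ⟨fun h F hF G hG a ha b hb => h a ⟨F, hF, ha⟩ b ⟨G, hG, hb⟩,
    fun h a ⟨F, hF, ha⟩ b ⟨G, hG, hb⟩ => h F hF G hG a ha b hb⟩

theorem toColex_lt_toColex_of_finLT {F G : Finset ℕ} (h : finLT F G)
    (hG : G.Nonempty) : toColex F < toColex G := by
  obtain ⟨b, hb⟩ := hG
  exact Colex.toColex_lt_toColex_iff_exists_forall_lt.mpr
    ⟨b, hb, fun hbF => (h b hbF b hb).false, fun a ha _ => h a ha b hb⟩

theorem sMin_mem {A : Finset ℕ} (h : A.Nonempty) : sMin A ∈ A :=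
  Nat.sInf_mem (s := (A : Set ℕ)) h

theorem sMin_le {A : Finset ℕ} {a : ℕ} (h : a ∈ A) : sMin A ≤ a :=
  Nat.sInf_le (s := (A : Set ℕ)) h

theorem sMin_eq_of_mem_of_le {A : Finset ℕ} {a : ℕ} (ha : a ∈ A) (h : ∀ b ∈ A, a ≤ b) :
    sMin A = a :=
  (sMin_le ha).antisymm (h _ (sMin_mem ⟨a, ha⟩))

theorem sMin_lt_sMin_of_finLT {F G : Finset ℕ} (h : finLT F G) (hF : F.Nonempty)
    (hG : G.Nonempty) : sMin F < sMin G :=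
  h _ (sMin_mem hF) _ (sMin_mem hG)

theorem sMin_image_sMin {𝓕 : Finset (Finset ℕ)} (h𝓕 : ∀ F ∈ 𝓕, F.Nonempty) :
    sMin (𝓕.image sMin) = sMin (𝓕.biUnion id) := by
  rcases 𝓕.eq_empty_or_nonempty with rfl | ⟨F₀, hF₀⟩
  · rfl
  have hne : (𝓕.biUnion id).Nonempty := (h𝓕 F₀ hF₀).mono (subset_biUnion_of_mem id hF₀)
  obtain ⟨F, hF, hmF⟩ := mem_biUnion.mp (sMin_mem hne)
  have hmin : sMin F = sMin (𝓕.biUnion id) :=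
    (sMin_le hmF).antisymm (sMin_le (mem_biUnion.mpr ⟨F, hF, sMin_mem (h𝓕 F hF)⟩))
  refine sMin_eq_of_mem_of_le (mem_image.mpr ⟨F, hF, hmin⟩) ?_
  simp only [mem_image, forall_exists_index, and_imp]
  rintro _ G hG rfl
  exact sMin_le (mem_biUnion.mpr ⟨G, hG, sMin_mem (h𝓕 G hG)⟩)

structure IsBlockFamily (𝓕 : Finset (Finset ℕ)) : Prop where
  nonempty : ∀ F ∈ 𝓕, F.Nonempty
  pairwise : (𝓕 : Set (Finset ℕ)).Pairwise fun F G => finLT F G ∨ finLT G F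

namespace IsBlockFamily

variable {𝓕 𝓖 : Finset (Finset ℕ)}

theorem mono (h : IsBlockFamily 𝓕) (h𝓖 : 𝓖 ⊆ 𝓕) : IsBlockFamily 𝓖 :=
  ⟨fun F hF => h.nonempty F (h𝓖 hF), h.pairwise.mono (coe_subset.mpr h𝓖)⟩

theorem finLT_of_sMin_lt (h : IsBlockFamily 𝓕) {F G : Finset ℕ} (hF : F ∈ 𝓕) (hG : G ∈ 𝓕)
    (hlt : sMin F < sMin G) : finLT F G :=
  (h.pairwise hF hG (by rintro rfl; exact hlt.false)).resolve_right fun hGF =>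
    (sMin_lt_sMin_of_finLT hGF (h.nonempty G hG) (h.nonempty F hF)).not_gt hlt

-- Colex order extends `finLT` on nonempty sets, so it lists the blocks from left to right.
theorem exists_fin_enum (h : IsBlockFamily 𝓕) : ∃ (k : ℕ) (F : Fin k → Finset ℕ),
    (∀ i j : Fin k, i < j → finLT (F i) (F j)) ∧ univ.image F = 𝓕 := by
  obtain ⟨e, he⟩ : ∃ e : Fin _ ↪o Colex (Finset ℕ), univ.image e = 𝓕.image toColex :=
    ⟨_, by convert image_orderEmbOfFin_univ (𝓕.image toColex) rfl⟩
  have hmem (i) : ofColex (e i) ∈ 𝓕 := by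
    obtain ⟨F, hF, hFe⟩ := mem_image.mp (he ▸ mem_image_of_mem e (mem_univ i))
    rwa [← hFe, ofColex_toColex]
  refine ⟨_, fun i => ofColex (e i), fun i j hij => ?_, ?_⟩
  · have hlt : e i < e j := e.strictMono hij
    refine (h.pairwise (hmem i) (hmem j) (ofColex.injective.ne hlt.ne)).resolve_right
      fun hji => (toColex_lt_toColex_of_finLT hji (h.nonempty _ (hmem i))).not_gt ?_
    simpa using hlt
  · rw [show (fun i => ofColex (e i)) = ofColex ∘ e from rfl, ← image_image, he, image_image]
    exact image_id'

theorem biUnion (h𝓕 : IsBlockFamily 𝓕) {φ : Finset ℕ → Finset (Finset ℕ)}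
    (hφ : ∀ F ∈ 𝓕, IsBlockFamily (φ F)) (hsub : ∀ F ∈ 𝓕, ∀ G ∈ φ F, G ⊆ F) :
    IsBlockFamily (𝓕.biUnion φ) := by
  constructor
  · simp only [mem_biUnion, forall_exists_index, and_imp]
    exact fun G F hF hG => (hφ F hF).nonempty G hG
  · intro G hG G' hG' hne
    obtain ⟨F, hF, hG⟩ := mem_biUnion.mp hG
    obtain ⟨F', hF', hG'⟩ := mem_biUnion.mp hG'
    by_cases hFF' : F = F'
    · subst hFF'
      exact (hφ F hF).pairwise hG hG' hne
    · exact (h𝓕.pairwise hF hF' hFF').imp (·.mono (hsub F hF G hG) (hsub F' hF' G' hG'))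
        (·.mono (hsub F' hF' G' hG') (hsub F hF G hG))

theorem image_of_subset (h𝓕 : IsBlockFamily 𝓕) {f : Finset ℕ → Finset ℕ}
    (hf : ∀ F ∈ 𝓕, f F ⊆ F) (hne : ∀ F ∈ 𝓕, (f F).Nonempty) : IsBlockFamily (𝓕.image f) := by
  constructor
  · simpa using hne
  · simp only [coe_image]
    rintro _ ⟨F, hF, rfl⟩ _ ⟨F', hF', rfl⟩ hne
    exact (h𝓕.pairwise hF hF' fun hFF' => hne (hFF' ▸ rfl)).imp
      (·.mono (hf F hF) (hf F' hF')) (·.mono (hf F' hF') (hf F hF))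

end IsBlockFamily

theorem mem_famComp_iff {M N : Set (Finset ℕ)} {A : Finset ℕ} :
    A ∈ famComp M N ↔ ∃ 𝓕 : Finset (Finset ℕ), IsBlockFamily 𝓕 ∧ (∀ F ∈ 𝓕, F ∈ N) ∧
      𝓕.image sMin ∈ M ∧ A = 𝓕.biUnion id := by
  constructor
  · rintro ⟨k, F, hN, hne, hlt, hM, rfl⟩
    refine ⟨univ.image F, ⟨?_, ?_⟩, ?_, by rwa [image_image], by rw [image_biUnion]; rfl⟩
    · simpa using hne
    · simp only [coe_image, coe_univ, Set.image_univ]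
      rintro _ ⟨i, rfl⟩ _ ⟨j, rfl⟩ hij
      rcases lt_trichotomy i j with h | rfl | h
      · exact .inl (hlt i j h)
      · exact absurd rfl hij
      · exact .inr (hlt j i h)
    · simpa using hN
  · rintro ⟨𝓕, h𝓕, hN, hM, rfl⟩
    obtain ⟨k, F, hlt, rfl⟩ := h𝓕.exists_fin_enum
    refine ⟨k, F, ?_, ?_, hlt, by rwa [image_image] at hM, by rw [image_biUnion]; rfl⟩
    · simpa using hN
    · simpa using h𝓕.nonempty

def blocksOver (𝓖 : Finset (Finset ℕ)) (H : Finset ℕ) : Finset (Finset ℕ) :=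
  𝓖.filter fun G => sMin G ∈ H

theorem image_sMin_blocksOver {𝓖 : Finset (Finset ℕ)} {H : Finset ℕ}
    (hH : H ⊆ 𝓖.image sMin) : (blocksOver 𝓖 H).image sMin = H := by
  rw [blocksOver, ← filter_image (p := (· ∈ H)), filter_mem_eq_inter, inter_eq_right.mpr hH]

theorem biUnion_blocksOver {𝓖 ℋ : Finset (Finset ℕ)} (h : 𝓖.image sMin ⊆ ℋ.biUnion id) :
    ℋ.biUnion (blocksOver 𝓖) = 𝓖 := by
  ext G
  simp only [blocksOver, mem_biUnion, mem_filter]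
  refine ⟨fun ⟨_, _, hG, _⟩ => hG, fun hG => ?_⟩
  obtain ⟨H, hH, hGH⟩ := mem_biUnion.mp (h (mem_image_of_mem sMin hG))
  exact ⟨H, hH, hG, hGH⟩

namespace IsBlockFamily

variable {𝓖 ℋ : Finset (Finset ℕ)}

theorem finLT_biUnion_blocksOver (h : IsBlockFamily 𝓖) {H H' : Finset ℕ} (hHH' : finLT H H') :
    finLT ((blocksOver 𝓖 H).biUnion id) ((blocksOver 𝓖 H').biUnion id) := by
  refine finLT_biUnion_iff.mpr fun G hG G' hG' => ?_
  rw [blocksOver, mem_filter] at hG hG'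
  exact h.finLT_of_sMin_lt hG.1 hG'.1 (hHH' _ hG.2 _ hG'.2)

theorem sMin_biUnion_blocksOver (h : IsBlockFamily 𝓖) {H : Finset ℕ}
    (hH : H ⊆ 𝓖.image sMin) : sMin ((blocksOver 𝓖 H).biUnion id) = sMin H := by
  rw [← sMin_image_sMin (𝓕 := blocksOver 𝓖 H) fun G hG => h.nonempty G (mem_filter.mp hG).1,
    image_sMin_blocksOver hH]

theorem image_biUnion_blocksOver (h𝓖 : IsBlockFamily 𝓖) (hℋ : IsBlockFamily ℋ)
    (hsub : ∀ H ∈ ℋ, H ⊆ 𝓖.image sMin) :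
    IsBlockFamily (ℋ.image fun H => (blocksOver 𝓖 H).biUnion id) := by
  constructor
  · simp only [mem_image, forall_exists_index, and_imp]
    rintro _ H hH rfl
    obtain ⟨b, hb⟩ := hℋ.nonempty H hH
    rw [← image_sMin_blocksOver (hsub H hH), mem_image] at hb
    obtain ⟨G, hG, -⟩ := hb
    exact (h𝓖.nonempty G (mem_filter.mp hG).1).mono (subset_biUnion_of_mem id hG)
  · simp only [coe_image]
    rintro _ ⟨H, hH, rfl⟩ _ ⟨H', hH', rfl⟩ hne
    exact (hℋ.pairwise hH hH' fun hHH' => hne (hHH' ▸ rfl)).imp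
      h𝓖.finLT_biUnion_blocksOver h𝓖.finLT_biUnion_blocksOver

end IsBlockFamily

theorem famComp_assoc_subset (L M N : Set (Finset ℕ)) :
    famComp (famComp L M) N ⊆ famComp L (famComp M N) := by
  intro A hA
  obtain ⟨𝓖, h𝓖, h𝓖N, hB, rfl⟩ := mem_famComp_iff.mp hA
  obtain ⟨ℋ, hℋ, hℋM, hℋL, hBℋ⟩ := mem_famComp_iff.mp hB
  have hsub (H) (hH : H ∈ ℋ) : H ⊆ 𝓖.image sMin := hBℋ ▸ subset_biUnion_of_mem id hH
  refine mem_famComp_iff.mpr ⟨_, h𝓖.image_biUnion_blocksOver hℋ hsub, ?_, ?_, ?_⟩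
  · simp only [mem_image, forall_exists_index, and_imp]
    rintro _ H hH rfl
    refine mem_famComp_iff.mpr ⟨blocksOver 𝓖 H, h𝓖.mono (filter_subset _ _),
      fun G hG => h𝓖N G (mem_filter.mp hG).1, ?_, rfl⟩
    rw [image_sMin_blocksOver (hsub H hH)]
    exact hℋM H hH
  · convert hℋL using 1
    rw [image_image]
    exact image_congr fun H hH => h𝓖.sMin_biUnion_blocksOver (hsub H hH)
  · rw [image_biUnion]
    simp only [id_eq]
    rw [← biUnion_biUnion, biUnion_blocksOver hBℋ.le]

theorem famComp_assoc_superset (L M N : Set (Finset ℕ)) :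
    famComp L (famComp M N) ⊆ famComp (famComp L M) N := by
  intro A hA
  obtain ⟨𝓕, h𝓕, h𝓕MN, h𝓕L, rfl⟩ := mem_famComp_iff.mp hA
  choose! φ hφ hφN hφM hφF using fun F hF => mem_famComp_iff.mp (h𝓕MN F hF)
  have hsub (F) (hF : F ∈ 𝓕) (G) (hG : G ∈ φ F) : G ⊆ F :=
    hφF F hF ▸ subset_biUnion_of_mem id hG
  have hmin (F) (hF : F ∈ 𝓕) : sMin ((φ F).image sMin) = sMin F := by
    rw [sMin_image_sMin (hφ F hF).nonempty, ← hφF F hF]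
  refine mem_famComp_iff.mpr ⟨𝓕.biUnion φ, h𝓕.biUnion hφ hsub, ?_, ?_, ?_⟩
  · simp only [mem_biUnion, forall_exists_index, and_imp]
    exact fun G F hF hG => hφN F hF G hG
  · refine mem_famComp_iff.mpr ⟨𝓕.image fun F => (φ F).image sMin,
      h𝓕.image_of_subset (fun F hF => ?_) (fun F hF => ?_), ?_, ?_, ?_⟩
    · exact image_subset_iff.mpr fun G hG =>
        hsub F hF G hG (sMin_mem ((hφ F hF).nonempty G hG))
    · obtain ⟨x, hx⟩ := h𝓕.nonempty F hF
      obtain ⟨G, hG, -⟩ := mem_biUnion.mp (hφF F hF ▸ hx)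
      exact ⟨_, mem_image_of_mem sMin hG⟩
    · simp only [mem_image, forall_exists_index, and_imp]
      rintro _ F hF rfl
      exact hφM F hF
    · convert h𝓕L using 1
      rw [image_image]
      exact image_congr hmin
    · rw [biUnion_image, image_biUnion]
      rfl
  · rw [biUnion_biUnion]
    exact biUnion_congr rfl hφF

/-- For any families `L, M, N` of finite subsets of `ℕ`,
the composition operation is associative: `(L[M])[N] = L[M[N]]`. -/
theorem famComp_assoc (L M N : Set (Finset ℕ)) :
    famComp (famComp L M) N = famComp L (famComp M N) :=
  (famComp_assoc_subset L M N).antisymm (famComp_assoc_superset L M N)
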